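/- Let ν be a positive Borel measure supported on [0,1]. Then, with absolute implicit constants, |∫₀¹ dν(r)/(1−rz)| ≍ ∫₀¹ dν(r)/|1−rz| ≍ ∫₀¹ dν(r)/(1−r(1−|1−z|)) for all z in the unit disc 𝔻. -/

import Mathlib

open MeasureTheory Complex Set Filter
open scoped ENNReal NNReal Real Classical

noncomputable section

/-- The open unit disc in `ℂ`. -/
def unitDisc : Set ℂ := Metric.ball 0 1

/-- The moment `ω_n = ∫₀¹ rⁿ dω(r)`. -/
def momNat (ω : Measure ℝ) (n : ℕ) : ℝ := ∫ r, r ^ n ∂ω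

/-- The Bergman reproducing kernel `B^ω_z(ζ) = Σ (ζ conj z)ⁿ/(2 ω_{2n+1})`. -/
def bergmanKernel (ω : Measure ℝ) (z ζ : ℂ) : ℂ :=
  ∑' n : ℕ, (ζ * (starRingEnd ℂ) z) ^ n / (2 * (momNat ω (2 * n + 1) : ℂ))

/-- The measure `ω⊗m` on the unit disc: `d(ω⊗m)(re^{iθ}) = r dω(r) dθ`. -/
def polarMeasure (ω : Measure ℝ) : Measure ℂ :=
  Measure.map (fun p : ℝ × ℝ => (p.1 : ℂ) * Complex.exp ((p.2 : ℂ) * Complex.I))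
    ((ω.withDensity fun r => ENNReal.ofReal r).prod
      (volume.restrict (Set.Ico (0 : ℝ) (2 * Real.pi))))

/-- The class `D̂`: `ω̂(r) ≤ C ω̂((1+r)/2)`. -/
def DhatClass (ω : Measure ℝ) : Prop :=
  ∃ C : ℝ≥0, ∀ r : ℝ, 0 ≤ r → r < 1 →
    ω (Set.Ico r 1) ≤ (C : ℝ≥0∞) * ω (Set.Ico ((1 + r) / 2) 1)

/-- The class `R` of regular measures on `[0,1)`. -/
def RClass (ω : Measure ℝ) : Prop :=
  ∃ C g b : ℝ, 0 < C ∧ 0 < g ∧ g ≤ b ∧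
    ∀ r t : ℝ, 0 ≤ r → r ≤ t → t < 1 →
      ENNReal.ofReal (C⁻¹ * ((1 - r) / (1 - t)) ^ g) * ω (Set.Ico t 1) ≤ ω (Set.Ico r 1) ∧
      ω (Set.Ico r 1) ≤ ENNReal.ofReal (C * ((1 - r) / (1 - t)) ^ b) * ω (Set.Ico t 1)

/-- `ω([a,b]) ≍ ω([a,(a+b)/2]) ≍ ω([(a+b)/2,b])`. -/
def Halving (ω : Measure ℝ) : Prop :=
  ∃ C : ℝ≥0, 0 < C ∧ ∀ a b : ℝ, 0 ≤ a → a ≤ b → b ≤ 1 →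
    (ω (Set.Icc a b) ≤ (C : ℝ≥0∞) * ω (Set.Icc a ((a + b) / 2)) ∧
      ω (Set.Icc a ((a + b) / 2)) ≤ (C : ℝ≥0∞) * ω (Set.Icc a b)) ∧
    (ω (Set.Icc a b) ≤ (C : ℝ≥0∞) * ω (Set.Icc ((a + b) / 2) b) ∧
      ω (Set.Icc ((a + b) / 2) b) ≤ (C : ℝ≥0∞) * ω (Set.Icc a b))

/-- The Carleson square over the arc of normalized length `h` starting at angle `θ₀`. -/
def carlesonSquare (θ₀ h : ℝ) : Set ℂ :=
  {z : ℂ | 1 - h ≤ ‖z‖ ∧ ‖z‖ < 1 ∧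
    ∃ θ ∈ Set.Ico θ₀ (θ₀ + 2 * Real.pi * h),
      z = (‖z‖ : ℂ) * Complex.exp ((θ : ℂ) * Complex.I)}

/-- The top half of the Carleson square. -/
def carlesonTop (θ₀ h : ℝ) : Set ℂ :=
  {z : ℂ | 1 - h ≤ ‖z‖ ∧ ‖z‖ < 1 - h / 2 ∧
    ∃ θ ∈ Set.Ico θ₀ (θ₀ + 2 * Real.pi * h),
      z = (‖z‖ : ℂ) * Complex.exp ((θ : ℂ) * Complex.I)}

/-- The Carleson square `S(I^β_{j,m})` over the dyadic arc `I^β_{j,m}`, of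
normalized length `2/2^j`. -/
def dyadicSq (β : ℝ) (j m : ℕ) : Set ℂ :=
  carlesonSquare (4 * Real.pi * ((m : ℝ) + β) / 2 ^ j) (2 / 2 ^ j)

/-- The top half `T(I^β_{j,m})`. -/
def dyadicTop (β : ℝ) (j m : ℕ) : Set ℂ :=
  carlesonTop (4 * Real.pi * ((m : ℝ) + β) / 2 ^ j) (2 / 2 ^ j)

/-- The Bergman projection `P_ω`. -/
def bergmanProj (ω : Measure ℝ) (f : ℂ → ℂ) (z : ℂ) : ℂ :=
  ∫ ζ, f ζ * (starRingEnd ℂ) (bergmanKernel ω z ζ) ∂(polarMeasure ω)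

/-- The maximal Bergman projection `P⁺_ω`. -/
def bergmanProjPlus (ω : Measure ℝ) (f : ℂ → ℂ) (z : ℂ) : ℂ :=
  ∫ ζ, f ζ * (‖bergmanKernel ω z ζ‖ : ℂ) ∂(polarMeasure ω)

/-- `B^ω_z` admits the representation (*) with exponent `γ ≥ 1` and a positive
measure `ν` supported on `[0,1]`. -/
def KernelRep (ω : Measure ℝ) (γ : ℝ) (ν : Measure ℝ) : Prop :=
  1 ≤ γ ∧ ν (Set.Icc (0 : ℝ) 1)ᶜ = 0 ∧
  ∀ z ∈ unitDisc, ∀ ζ ∈ unitDisc,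
    bergmanKernel ω z ζ =
      (1 - (starRingEnd ℂ) z * ζ) ^ (-(γ : ℂ)) *
        ∫ r : ℝ, (1 - (r : ℂ) * ((starRingEnd ℂ) z * ζ))⁻¹ ∂ν

/-- The Bekollé–Bonami characteristic `B_{p,μ}(v)`, a supremum over all Carleson squares. -/
def BpConst (p : ℝ) (μ : Measure ℂ) (v : ℂ → ℝ) : ℝ≥0∞ :=
  ⨆ (θ₀ : ℝ) (h : ℝ) (_ : 0 < h) (_ : h ≤ 1),
    ((∫⁻ z in carlesonSquare θ₀ h, ENNReal.ofReal (v z) ∂μ) / μ (carlesonSquare θ₀ h)) *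
      ((∫⁻ z in carlesonSquare θ₀ h, ENNReal.ofReal (v z ^ (-(1 / (p - 1)))) ∂μ) /
          μ (carlesonSquare θ₀ h)) ^ (p - 1)

/-- An `ω`-weight: positive on the disc and `(ω⊗m)`-integrable. -/
def IsWeight (μ : Measure ℂ) (v : ℂ → ℝ) : Prop :=
  (∀ z ∈ unitDisc, 0 < v z) ∧ ∫⁻ z, ENNReal.ofReal (v z) ∂μ < ⊤

/-- The weighted maximal function `M_ω`. -/
def maxFn (μ : Measure ℂ) (v : ℂ → ℝ) (z : ℂ) : ℝ≥0∞ :=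
  ⨆ (a : ℂ) (r : ℝ) (_ : z ∈ Metric.ball a r),
    (∫⁻ ζ in Metric.ball a r ∩ unitDisc, ENNReal.ofReal (v ζ) ∂μ) /
      μ (Metric.ball a r ∩ unitDisc)

/-- The class `B_{1,ω}`: `M_ω(v) ≤ C v` almost everywhere. -/
def B1Class (μ : Measure ℂ) (v : ℂ → ℝ) : Prop :=
  ∃ C : ℝ≥0, ∀ᵐ z ∂μ, maxFn μ v z ≤ (C : ℝ≥0∞) * ENNReal.ofReal (v z)

/-- The weighted `L^p` norm `(∫ |f|^p v dμ)^{1/p}`. -/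
def lpNorm (μ : Measure ℂ) (p : ℝ) (v : ℂ → ℝ) (f : ℂ → ℂ) : ℝ≥0∞ :=
  (∫⁻ z, (‖f z‖₊ : ℝ≥0∞) ^ p * ENNReal.ofReal (v z) ∂μ) ^ (1 / p)

/-- `Ψ` is essentially decreasing on `(0,2)`. -/
def EssDecreasingOn (Ψ : ℝ → ℝ) : Prop :=
  ∃ C : ℝ, ∀ s t : ℝ, 0 < s → s ≤ t → t < 2 → Ψ t ≤ C * Ψ s

/-- The kernel `K_Ψ(z,ζ) = Ψ(|1 - conj ζ z|)/|1 - conj ζ z|`. -/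
def Kpsi (Ψ : ℝ → ℝ) (z ζ : ℂ) : ℝ :=
  Ψ (‖1 - (starRingEnd ℂ) ζ * z‖) / ‖1 - (starRingEnd ℂ) ζ * z‖

/-- The dyadic kernel `K^β_Ψ(z,ζ) = Σ_{I ∈ D^β} 1_{S(I)}(z) 1_{S(I)}(ζ) Ψ(|I|)/|I|`. -/
def KpsiDyadic (Ψ : ℝ → ℝ) (β : ℝ) (z ζ : ℂ) : ℝ :=
  ∑' jm : ℕ × ℕ,
    if jm.2 < 2 ^ jm.1 ∧ z ∈ dyadicSq β jm.1 jm.2 ∧ ζ ∈ dyadicSq β jm.1 jm.2 then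
      Ψ (2 / 2 ^ jm.1) / (2 / 2 ^ jm.1)
    else 0

/-- The dyadic weighted maximal function `M_{ν,D^β}`. -/
def dyadicMax (ν : Measure ℂ) (β : ℝ) (f : ℂ → ℂ) (z : ℂ) : ℝ≥0∞ :=
  ⨆ (jm : ℕ × ℕ) (_ : jm.2 < 2 ^ jm.1) (_ : z ∈ dyadicSq β jm.1 jm.2),
    (∫⁻ ζ in dyadicSq β jm.1 jm.2, (‖f ζ‖₊ : ℝ≥0∞) ∂ν) / ν (dyadicSq β jm.1 jm.2)

/-- The dyadic operator `P^β_{Ψ,μ}(f) = Σ_{I ∈ D^β} ⟨f, 1_{S(I)} Ψ(|I|)/|I|⟩_{L²_μ} 1_{S(I)}`. -/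
def dyadicOpPsi (μ : Measure ℂ) (ψ : ℝ → ℝ) (β : ℝ) (f : ℂ → ℂ) (z : ℂ) : ℂ :=
  ∑' jm : ℕ × ℕ,
    if jm.2 < 2 ^ jm.1 ∧ z ∈ dyadicSq β jm.1 jm.2 then
      ((ψ (2 / 2 ^ jm.1) / (2 / 2 ^ jm.1) : ℝ) : ℂ) * ∫ ζ in dyadicSq β jm.1 jm.2, f ζ ∂μ
    else 0

/-- The maximal operator `P⁺_{Ψ,μ}(f)(z) = ∫ |Ψ(1-conj ζ z)/(1-conj ζ z)| f(ζ) dμ(ζ)`. -/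
def PplusPsi (μ : Measure ℂ) (Ψ : ℂ → ℂ) (f : ℂ → ℂ) (z : ℂ) : ℂ :=
  ∫ ζ, ((‖Ψ (1 - (starRingEnd ℂ) ζ * z)‖ /
      ‖1 - (starRingEnd ℂ) ζ * z‖ : ℝ) : ℂ) * f ζ ∂μ

/-- Euclidean distance between two sets, as an `ℝ≥0∞`-valued infimum. -/
def setEDist (A B : Set ℂ) : ℝ≥0∞ := ⨅ a ∈ A, ⨅ b ∈ B, edist a b

/-- The polar rectangle `{re^{iθ} : r ∈ [r₁,r₂), θ ∈ [θ₁,θ₂)}`. -/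
def polarRect (r₁ r₂ θ₁ θ₂ : ℝ) : Set ℂ :=
  {z : ℂ | ∃ r θ : ℝ, r ∈ Set.Ico r₁ r₂ ∧ θ ∈ Set.Ico θ₁ θ₂ ∧
    z = (r : ℂ) * Complex.exp ((θ : ℂ) * Complex.I)}

/-- The generation-`k` dyadic polar subrectangle, with indices `i, l < 2^k`, of the
Carleson square over the half-circle starting at angle `θ₀`. -/
def dyadicPolarRect (θ₀ : ℝ) (k i l : ℕ) : Set ℂ :=
  polarRect (1 / 2 + (i : ℝ) / 2 ^ (k + 1)) (1 / 2 + ((i : ℝ) + 1) / 2 ^ (k + 1))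
    (θ₀ + (l : ℝ) * Real.pi / 2 ^ k) (θ₀ + ((l : ℝ) + 1) * Real.pi / 2 ^ k)

/-- The dyadic positive operator `T(f) = Σ_{I ∈ D^β} τ_{S(I)} (E^μ_{S(I)} f) 1_{S(I)}`. -/
def dyadicPosOp (μ : Measure ℂ) (β : ℝ) (τ : ℕ × ℕ → ℝ) (f : ℂ → ℂ) (z : ℂ) : ℂ :=
  ∑' jm : ℕ × ℕ,
    if jm.2 < 2 ^ jm.1 ∧ z ∈ dyadicSq β jm.1 jm.2 then
      ((τ jm / (μ (dyadicSq β jm.1 jm.2)).toReal : ℝ) : ℂ) *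
        ∫ ζ in dyadicSq β jm.1 jm.2, f ζ ∂μ
    else 0

/-!
Write `w_r = 1 - r z`. Since `w_r = (1 - r) + r (1 - z)`, the triangle inequality gives
`|w_r| ≤ 1 - r (1 - |1 - z|)`, and bounding `|1 - z| ≤ (1 - Re z) + |Im z|` gives
`1 - r (1 - |1 - z|) ≤ Re w_r + |Im w_r| ≤ 2 |w_r|`. For the first comparison, the values
`1 / w_r` all lie in one closed quadrant: `Re (1 / w_r) ≥ 0` and `Im (1 / w_r) = r Im z / |w_r|²`
has the sign of `Im z`. On such a quadrant `|v| ≤ Re (c v)` for a fixed `c = 1 ∓ i`, and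
integrating gives `∫ |1 / w_r| dν ≤ |c| |∫ 1 / w_r dν|`.
-/

theorem integral_norm_le_norm_mul_norm_integral {α : Type*} [MeasurableSpace α]
    {μ : Measure α} {f : α → ℂ} (hf : Integrable f μ) (c : ℂ)
    (h : ∀ᵐ x ∂μ, ‖f x‖ ≤ (c * f x).re) :
    ∫ x, ‖f x‖ ∂μ ≤ ‖c‖ * ‖∫ x, f x ∂μ‖ :=
  calc ∫ x, ‖f x‖ ∂μ ≤ ∫ x, (c * f x).re ∂μ := integral_mono_ae hf.norm (hf.const_mul c).re h
    _ = (c * ∫ x, f x ∂μ).re := by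
      rw [← integral_const_mul]; exact integral_re (hf.const_mul c)
    _ ≤ ‖c‖ * ‖∫ x, f x ∂μ‖ := (re_le_norm _).trans (norm_mul _ _).le

theorem ContinuousOn.integrable_of_ae_mem {α E : Type*} [TopologicalSpace α] [T2Space α]
    [MeasurableSpace α] [OpensMeasurableSpace α] [NormedAddCommGroup E] {μ : Measure α}
    [IsFiniteMeasureOnCompacts μ] {f : α → E} {K : Set α} (hf : ContinuousOn f K)
    (hK : IsCompact K) (hμ : ∀ᵐ x ∂μ, x ∈ K) : Integrable f μ := by
  simpa [IntegrableOn, Measure.restrict_eq_self_of_ae_mem hμ] using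
    hf.integrableOn_compact (μ := μ) hK

theorem norm_le_re_mul_one_sub_mul_I {v : ℂ} {s : ℝ} (hre : 0 ≤ v.re) (him : |v.im| ≤ s * v.im) :
    ‖v‖ ≤ ((1 - s * I) * v).re := by
  rw [show ((1 - s * I) * v).re = v.re + s * v.im by simp]
  linarith [norm_le_abs_re_add_abs_im v, abs_of_nonneg hre]

section OneSubMul

variable {z : ℂ} {r : ℝ}

theorem norm_one_sub_ofReal_mul_pos (hz : ‖z‖ < 1) (hr0 : 0 ≤ r) (hr1 : r ≤ 1) :
    0 < ‖1 - (r : ℂ) * z‖ := by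
  have hrz : ‖(r : ℂ) * z‖ < 1 := by
    rw [norm_mul, norm_real, Real.norm_of_nonneg hr0]
    nlinarith [norm_nonneg z]
  linarith [norm_sub_norm_le (1 : ℂ) ((r : ℂ) * z), norm_one (α := ℂ)]

theorem norm_one_sub_ofReal_mul_le (hr0 : 0 ≤ r) (hr1 : r ≤ 1) :
    ‖1 - (r : ℂ) * z‖ ≤ 1 - r * (1 - ‖1 - z‖) :=
  calc ‖1 - (r : ℂ) * z‖ = ‖((1 - r : ℝ) : ℂ) + (r : ℂ) * (1 - z)‖ := by push_cast; ring_nf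
    _ ≤ ‖((1 - r : ℝ) : ℂ)‖ + ‖(r : ℂ) * (1 - z)‖ := norm_add_le _ _
    _ = 1 - r * (1 - ‖1 - z‖) := by
      rw [norm_mul, norm_real, norm_real, Real.norm_of_nonneg (by linarith),
        Real.norm_of_nonneg hr0]
      ring

theorem one_sub_mul_one_sub_norm_le_two_mul (hz : z.re ≤ 1) (hr : 0 ≤ r) :
    1 - r * (1 - ‖1 - z‖) ≤ 2 * ‖1 - (r : ℂ) * z‖ := by
  have h1z : ‖1 - z‖ ≤ (1 - z.re) + |z.im| := by
    simpa [abs_of_nonneg (sub_nonneg.2 hz)] using norm_le_abs_re_add_abs_im (1 - z)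
  have hre : 1 - r * z.re ≤ ‖1 - (r : ℂ) * z‖ := by
    simpa using re_le_norm (1 - (r : ℂ) * z)
  have him : r * |z.im| ≤ ‖1 - (r : ℂ) * z‖ := by
    simpa [abs_mul, abs_of_nonneg hr] using abs_im_le_norm (1 - (r : ℂ) * z)
  nlinarith

theorem exists_norm_inv_one_sub_ofReal_mul_le_re (hz : z.re ≤ 1) :
    ∃ c : ℂ, ‖c‖ ≤ 2 ∧ ∀ r : ℝ, 0 ≤ r → r ≤ 1 →
      ‖(1 - (r : ℂ) * z)⁻¹‖ ≤ (c * (1 - (r : ℂ) * z)⁻¹).re := by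
  obtain ⟨s, hs, hsz⟩ : ∃ s : ℝ, |s| = 1 ∧ |z.im| = s * z.im := by
    rcases le_total 0 z.im with h | h
    · exact ⟨1, by simp, by simp [abs_of_nonneg h]⟩
    · exact ⟨-1, by simp, by simp [abs_of_nonpos h]⟩
  refine ⟨1 - s * I, ?_, fun r hr0 hr1 => norm_le_re_mul_one_sub_mul_I ?_ ?_⟩
  · calc ‖1 - s * I‖ ≤ ‖(1 : ℂ)‖ + ‖s * I‖ := norm_sub_le _ _
      _ = 2 := by simp [hs]; norm_num
  · rw [inv_re]
    refine div_nonneg ?_ (normSq_nonneg _)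
    simp only [sub_re, one_re, re_ofReal_mul]
    nlinarith
  · have him : (1 - (r : ℂ) * z).im = -(r * z.im) := by simp
    rw [inv_im, him, neg_neg, abs_div, abs_of_nonneg (normSq_nonneg _), abs_mul,
      abs_of_nonneg hr0, hsz]
    exact le_of_eq (by ring)

theorem inv_one_sub_mul_one_sub_norm_le (hz : ‖z‖ < 1) (hr0 : 0 ≤ r) (hr1 : r ≤ 1) :
    (1 - r * (1 - ‖1 - z‖))⁻¹ ≤ ‖1 - (r : ℂ) * z‖⁻¹ :=
  inv_anti₀ (norm_one_sub_ofReal_mul_pos hz hr0 hr1) (norm_one_sub_ofReal_mul_le hr0 hr1)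

theorem inv_norm_one_sub_ofReal_mul_le (hz : ‖z‖ < 1) (hr0 : 0 ≤ r) (hr1 : r ≤ 1) :
    ‖1 - (r : ℂ) * z‖⁻¹ ≤ 2 * (1 - r * (1 - ‖1 - z‖))⁻¹ := by
  have hpos : 0 < 1 - r * (1 - ‖1 - z‖) :=
    (norm_one_sub_ofReal_mul_pos hz hr0 hr1).trans_le (norm_one_sub_ofReal_mul_le hr0 hr1)
  calc ‖1 - (r : ℂ) * z‖⁻¹ ≤ ((1 - r * (1 - ‖1 - z‖)) / 2)⁻¹ :=
        inv_anti₀ (by positivity)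
          (by linarith [one_sub_mul_one_sub_norm_le_two_mul ((re_le_norm z).trans hz.le) hr0])
    _ = 2 * (1 - r * (1 - ‖1 - z‖))⁻¹ := by rw [inv_div, div_eq_mul_inv]

theorem integrable_inv_one_sub_ofReal_mul {ν : Measure ℝ} [IsFiniteMeasureOnCompacts ν]
    (hν : ∀ᵐ r ∂ν, r ∈ Icc (0 : ℝ) 1) (hz : ‖z‖ < 1) :
    Integrable (fun r : ℝ => (1 - (r : ℂ) * z)⁻¹) ν :=
  ((by fun_prop : Continuous fun r : ℝ => 1 - (r : ℂ) * z).continuousOn.inv₀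
    fun r hr => norm_pos_iff.1 (norm_one_sub_ofReal_mul_pos hz hr.1 hr.2)
    ).integrable_of_ae_mem isCompact_Icc hν

theorem integrable_inv_one_sub_mul_one_sub_norm {ν : Measure ℝ} [IsFiniteMeasureOnCompacts ν]
    (hν : ∀ᵐ r ∂ν, r ∈ Icc (0 : ℝ) 1) (hz : ‖z‖ < 1) :
    Integrable (fun r : ℝ => (1 - r * (1 - ‖1 - z‖))⁻¹) ν :=
  ((by fun_prop : Continuous fun r : ℝ => 1 - r * (1 - ‖1 - z‖)).continuousOn.inv₀
    fun r hr => ((norm_one_sub_ofReal_mul_pos hz hr.1 hr.2).trans_le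
      (norm_one_sub_ofReal_mul_le hr.1 hr.2)).ne'
    ).integrable_of_ae_mem isCompact_Icc hν

end OneSubMul

/-- Lemma 4.1: with absolute constants,
`|∫₀¹ dν(r)/(1-rz)| ≍ ∫₀¹ dν(r)/|1-rz| ≍ ∫₀¹ dν(r)/(1-r(1-|1-z|))` on the disc. -/
theorem nu_integral_three_way_comparison :
    ∃ C : ℝ, 0 < C ∧ ∀ ν : Measure ℝ, IsFiniteMeasure ν → ν (Set.Icc (0 : ℝ) 1)ᶜ = 0 →
      ∀ z ∈ unitDisc,
        (‖∫ r : ℝ, (1 - (r : ℂ) * z)⁻¹ ∂ν‖ ≤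
            C * ∫ r : ℝ, (‖1 - (r : ℂ) * z‖)⁻¹ ∂ν ∧
          (∫ r : ℝ, (‖1 - (r : ℂ) * z‖)⁻¹ ∂ν) ≤
            C * ‖∫ r : ℝ, (1 - (r : ℂ) * z)⁻¹ ∂ν‖) ∧
        ((∫ r : ℝ, (‖1 - (r : ℂ) * z‖)⁻¹ ∂ν) ≤
            C * ∫ r : ℝ, (1 - r * (1 - ‖1 - z‖))⁻¹ ∂ν ∧
          (∫ r : ℝ, (1 - r * (1 - ‖1 - z‖))⁻¹ ∂ν) ≤
            C * ∫ r : ℝ, (‖1 - (r : ℂ) * z‖)⁻¹ ∂ν) := by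
  refine ⟨2, two_pos, fun ν _ hν z hz => ?_⟩
  have hz : ‖z‖ < 1 := by simpa [unitDisc] using hz
  have hsupp : ∀ᵐ r ∂ν, r ∈ Icc (0 : ℝ) 1 := hν
  have hf := integrable_inv_one_sub_ofReal_mul hsupp hz
  have hg : Integrable (fun r : ℝ => ‖1 - (r : ℂ) * z‖⁻¹) ν := by simpa using hf.norm
  have hh := integrable_inv_one_sub_mul_one_sub_norm hsupp hz
  obtain ⟨c, hc, hcz⟩ := exists_norm_inv_one_sub_ofReal_mul_le_re ((re_le_norm z).trans hz.le)
  have h_norm_le : ‖∫ r, (1 - (r : ℂ) * z)⁻¹ ∂ν‖ ≤ ∫ r, ‖1 - (r : ℂ) * z‖⁻¹ ∂ν := by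
    simpa using norm_integral_le_integral_norm (fun r : ℝ => (1 - (r : ℂ) * z)⁻¹)
  have h_le_norm : ∫ r, ‖1 - (r : ℂ) * z‖⁻¹ ∂ν ≤ 2 * ‖∫ r, (1 - (r : ℂ) * z)⁻¹ ∂ν‖ := by
    have h := integral_norm_le_norm_mul_norm_integral hf c
      (hsupp.mono fun r hr => hcz r hr.1 hr.2)
    simp only [norm_inv] at h
    exact h.trans (by gcongr)
  have h_le_bound : ∫ r, ‖1 - (r : ℂ) * z‖⁻¹ ∂ν ≤ 2 * ∫ r, (1 - r * (1 - ‖1 - z‖))⁻¹ ∂ν := by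
    rw [← integral_const_mul]
    exact integral_mono_ae hg (hh.const_mul 2)
      (hsupp.mono fun r hr => inv_norm_one_sub_ofReal_mul_le hz hr.1 hr.2)
  have h_bound_le : ∫ r, (1 - r * (1 - ‖1 - z‖))⁻¹ ∂ν ≤ ∫ r, ‖1 - (r : ℂ) * z‖⁻¹ ∂ν :=
    integral_mono_ae hh hg (hsupp.mono fun r hr => inv_one_sub_mul_one_sub_norm_le hz hr.1 hr.2)
  have hg0 : 0 ≤ ∫ r, ‖1 - (r : ℂ) * z‖⁻¹ ∂ν := integral_nonneg fun r => by positivity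
  exact ⟨⟨by linarith, h_le_norm⟩, h_le_bound, by linarith⟩

end
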